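/- arXiv:1908.07489 — 6 statements merged into one kernel-verified Lean document; each statement's English description precedes it below -/
import Mathlib

section
/- Let q_1, ..., q_n ∈ (0,1) with n ≥ 2, Σ_i q_i = 1, and q_1 = max_i q_i. Then Σ_i f(q_i) ≤ 1, where f(q) = q(1-(1-q)²)/((1-q)² + q). -/
/-!
The ratio `f x / x` increases on `(0, 1/2]` and `f (1/2) = 1/2`, so `f` lies below the chord
`x ↦ (f c / c) x` on `[0, c]` for every `c ≤ 1/2`. If `q₀ ≤ 1/2`, taking `c = 1/2` gives
`∑ f (qᵢ) ≤ ∑ qᵢ = 1`. Otherwise the remaining `qᵢ` lie in `[0, 1 - q₀]` and sum to `1 - q₀`,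
so the chord with `c = 1 - q₀` bounds their contribution by `f (1 - q₀) = 1 - f q₀`.
-/

open Finset

noncomputable def bertrandShare (x : ℝ) : ℝ := x * (1 - (1 - x) ^ 2) / ((1 - x) ^ 2 + x)

lemma bertrandShare_denom_pos (x : ℝ) : 0 < (1 - x) ^ 2 + x := by
  nlinarith [sq_nonneg (2 * x - 1)]

lemma bertrandShare_add_bertrandShare_one_sub (x : ℝ) :
    bertrandShare x + bertrandShare (1 - x) = 1 := by
  have h := bertrandShare_denom_pos x
  have h' := bertrandShare_denom_pos (1 - x)
  unfold bertrandShare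
  field_simp
  ring

lemma bertrandShare_half : bertrandShare (1 / 2) = 1 / 2 := by
  norm_num [bertrandShare]

lemma bertrandShare_mul_le_mul_bertrandShare {x c : ℝ} (hx : 0 ≤ x) (hxc : x ≤ c)
    (hc : c ≤ 1 / 2) : bertrandShare x * c ≤ bertrandShare c * x := by
  unfold bertrandShare
  rw [div_mul_eq_mul_div, div_mul_eq_mul_div,
    div_le_div_iff₀ (bertrandShare_denom_pos x) (bertrandShare_denom_pos c)]
  -- the difference of the two sides is `x² c² (c - x) (2 - c - x - c x)`
  have hfactor : 0 ≤ 2 - c - x - c * x := by nlinarith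
  nlinarith [mul_nonneg (mul_nonneg (mul_nonneg (hx.trans hxc) hx) (sub_nonneg.2 hxc)) hfactor]

lemma sum_bertrandShare_mul_le {ι : Type*} (s : Finset ι) (q : ι → ℝ) {c : ℝ} (hc : c ≤ 1 / 2)
    (hq : ∀ i ∈ s, 0 ≤ q i ∧ q i ≤ c) :
    (∑ i ∈ s, bertrandShare (q i)) * c ≤ bertrandShare c * ∑ i ∈ s, q i := by
  rw [sum_mul, mul_sum]
  exact sum_le_sum fun i hi => bertrandShare_mul_le_mul_bertrandShare (hq i hi).1 (hq i hi).2 hc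

theorem sum_f_le_one
    (n : ℕ) (hn : 2 ≤ n) (q : Fin n → ℝ)
    (hq : ∀ i, q i ∈ Set.Ioo (0:ℝ) 1)
    (hsum : ∑ i, q i = 1)
    (hmax : ∀ i, q i ≤ q ⟨0, by omega⟩)
    (f : ℝ → ℝ)
    (hf : ∀ x : ℝ, f x = x * (1 - (1 - x) ^ 2) / ((1 - x) ^ 2 + x)) :
    ∑ i, f (q i) ≤ 1 := by
  obtain rfl : f = bertrandShare := funext hf
  set i₀ : Fin n := ⟨0, by omega⟩
  by_cases hsmall : q i₀ ≤ 1 / 2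
  · have h := sum_bertrandShare_mul_le univ q le_rfl fun i _ =>
      ⟨(hq i).1.le, (hmax i).trans hsmall⟩
    rw [bertrandShare_half, hsum] at h
    linarith
  · have hrest : ∑ i ∈ univ.erase i₀, q i = 1 - q i₀ := by
      rw [← hsum, ← add_sum_erase univ q (mem_univ i₀)]; ring
    have h := sum_bertrandShare_mul_le (univ.erase i₀) q (c := 1 - q i₀) (by linarith)
      fun i hi => ⟨(hq i).1.le, hrest ▸ single_le_sum (fun j _ => (hq j).1.le) hi⟩
    rw [hrest] at h
    have hrest_le := le_of_mul_le_mul_right h (by linarith [(hq i₀).2])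
    rw [← add_sum_erase univ _ (mem_univ i₀)]
    linarith [bertrandShare_add_bertrandShare_one_sub (q i₀)]
end

section
/- In a Bertrand game under the MNL model with sellers S and fixed competitor prices p_{-i}, the best-response price of seller i equals p_i* = θ_i - log((1 + A) · W(exp(θ_i - 1)/(1 + A))), where A = Σ_{j∈S\{i}} exp(θ_j - p_j) and W is the Lambert W function. Moreover p_i* ≥ 1. -/
/-!
Let `w = W (exp (θ - 1) / (1 + A))`. The Lambert equation rewrites as `(1 + A) w = exp (θ - 1 - w)`,
so the claimed price is `1 + w ≥ 1`, where the revenue equals `w`. The bound `r p ≤ w` clears to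
`(p - w) exp (θ - p) ≤ (1 + A) w = exp (θ - 1 - w)`, which is `y exp (-y) ≤ exp (-1)` at `y = p - w`.
-/

open Real

noncomputable section

def mnlRevenue (θ A p : ℝ) : ℝ := p * exp (θ - p) / (1 + exp (θ - p) + A)

variable {θ A w : ℝ}

lemma mul_lambert_eq_exp (hA : 0 < 1 + A) (hw : w * exp w = exp (θ - 1) / (1 + A)) :
    (1 + A) * w = exp (θ - 1 - w) := by
  rw [exp_sub, eq_div_iff (exp_pos w).ne', mul_assoc, hw, mul_div_cancel₀ _ hA.ne']

lemma sub_mul_exp_sub_le (θ p w : ℝ) : (p - w) * exp (θ - p) ≤ exp (θ - 1 - w) := by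
  have h := mul_le_mul_of_nonneg_right (mul_exp_neg_le_exp_neg_one (p - w)) (exp_pos (θ - w)).le
  rwa [mul_assoc, ← exp_add, ← exp_add, show -(p - w) + (θ - w) = θ - p by ring,
    show -1 + (θ - w) = θ - 1 - w by ring] at h

section

variable (hA : 0 < 1 + A) (hfix : (1 + A) * w = exp (θ - 1 - w))
include hA hfix

lemma mnlRevenue_one_add : mnlRevenue θ A (1 + w) = w := by
  have hE : exp (θ - (1 + w)) = (1 + A) * w := by rw [hfix]; ring_nf
  rw [mnlRevenue, hE, div_eq_iff (by linarith [exp_pos (θ - 1 - w)])]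
  ring

lemma mnlRevenue_le (p : ℝ) : mnlRevenue θ A p ≤ w := by
  have hE := exp_pos (θ - p)
  rw [mnlRevenue, div_le_iff₀ (by linarith)]
  nlinarith [sub_mul_exp_sub_le θ p w]

end

end

theorem bertrand_best_response
    (W : ℝ → ℝ)
    (hW : ∀ x : ℝ, 0 < x → 0 < W x ∧ W x * Real.exp (W x) = x)
    (θi A : ℝ) (hA : 0 ≤ A)
    (r : ℝ → ℝ)
    (hr : ∀ p : ℝ, r p = p * Real.exp (θi - p) / (1 + Real.exp (θi - p) + A)) :
    (∀ p : ℝ,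
      r p ≤ r (θi - Real.log ((1 + A) * W (Real.exp (θi - 1) / (1 + A))))) ∧
    1 ≤ θi - Real.log ((1 + A) * W (Real.exp (θi - 1) / (1 + A))) := by
  have h1A : 0 < 1 + A := by linarith
  obtain ⟨hw, hwe⟩ := hW _ (div_pos (exp_pos (θi - 1)) h1A)
  set w := W (exp (θi - 1) / (1 + A))
  have hfix := mul_lambert_eq_exp h1A hwe
  have hprice : θi - log ((1 + A) * w) = 1 + w := by rw [hfix, log_exp]; ring
  have hrev : r = mnlRevenue θi A := funext hr
  rw [hprice, hrev, mnlRevenue_one_add h1A hfix]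
  exact ⟨mnlRevenue_le h1A hfix, by linarith⟩
end

section
/- For all x in the interval [exp(-1), 2·exp(2)], the Lambert W function satisfies W(x) ≥ 2x/(e + x), where e is Euler's number. -/
/-! Put `u = 2e/(e + x)`, so that `w = 2x/(e + x) = 2 - u`. From `u e^{-u} ≤ e^{-1}` we get
`w e^w = w e^2 e^{-u} ≤ w e / u = x`, and `W x ≥ w` follows because `t ↦ t e^t` is increasing
on `[0, ∞)`. -/

open Real Set

theorem mul_exp_strictMonoOn : StrictMonoOn (fun t : ℝ ↦ t * exp t) (Ici 0) :=
  fun _ ha _ _ hab ↦ mul_lt_mul hab (exp_le_exp.mpr hab.le) (exp_pos _) (le_trans ha hab.le)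

theorem two_mul_div_exp_one_add_mul_exp_le {x : ℝ} (hx : 0 ≤ x) :
    2 * x / (exp 1 + x) * exp (2 * x / (exp 1 + x)) ≤ x := by
  set e := exp 1
  have he : 0 < e := exp_pos 1
  have hsum : 0 < e + x := by positivity
  set u := 2 * e / (e + x) with hu_def
  have hu : 0 < u := by positivity
  have hw : 2 * x / (e + x) = 2 - u := by rw [hu_def]; field_simp; ring
  have hexp_u : exp (-u) ≤ exp (-1) / u := by
    rw [le_div_iff₀ hu, mul_comm]
    exact mul_exp_neg_le_exp_neg_one u
  have hexp_two : exp 2 * exp (-1) = e := by rw [← exp_add]; norm_num [e]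
  calc 2 * x / (e + x) * exp (2 * x / (e + x))
      = 2 * x / (e + x) * (exp 2 * exp (-u)) := by rw [hw, sub_eq_add_neg, exp_add]
    _ ≤ 2 * x / (e + x) * (exp 2 * (exp (-1) / u)) := by gcongr
    _ = x := by rw [mul_div_assoc', hexp_two, hu_def]; field_simp

theorem lambertW_lower_bound
    (W : ℝ → ℝ)
    (hW : ∀ x : ℝ, 0 ≤ x → 0 ≤ W x ∧ W x * Real.exp (W x) = x) :
    ∀ x ∈ Set.Icc (Real.exp (-1)) (2 * Real.exp 2),
      2 * x / (Real.exp 1 + x) ≤ W x := by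
  intro x hx
  have hx0 : 0 ≤ x := (exp_pos _).le.trans hx.1
  obtain ⟨hW0, hWx⟩ := hW x hx0
  rw [← mul_exp_strictMonoOn.le_iff_le (by positivity : (0 : ℝ) ≤ _) hW0]
  simpa only [hWx] using two_mul_div_exp_one_add_mul_exp_le hx0
end

section
/- In the Cournot game under the MNL model with seller set S, the unique solution of the first-order conditions θ_i - 1 - q_i/(1 - Σ_{j∈S} q_j) - log(q_i/(1 - Σ_{j∈S} q_j)) = 0 for all i ∈ S is given by q_i = w_i/(1 + Σ_{j∈S} w_j), where w_i = W(exp(θ_i - 1)). -/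
/-!
Writing `u i = q i / (1 - ∑ j ∈ S, q j)`, the first-order condition for seller `i` says
`log (u i) + u i = θ i - 1`, i.e. `u i * exp (u i) = exp (θ i - 1)`. Since `u ↦ u * exp u` is
injective on the positive reals, this forces `u i = w i`. Conversely the shares are recovered
from the ratios by `1 - ∑ q = 1 / (1 + ∑ u)`, so `q i = w i / (1 + ∑ w)`.
-/

open Real Finset

lemma Real.strictMonoOn_mul_exp : StrictMonoOn (fun x : ℝ => x * exp x) (Set.Ici 0) :=
  fun _ ha _ _ hab =>
    mul_lt_mul hab (exp_le_exp.mpr hab.le) (exp_pos _) (lt_of_le_of_lt ha hab).le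

lemma Real.mul_exp_eq_exp_iff {u c : ℝ} (hu : 0 < u) :
    u * exp u = exp c ↔ c - u - log u = 0 := by
  rw [← exp_log hu, ← exp_add, exp_eq_exp, log_exp]
  constructor <;> intro h <;> linarith

lemma sub_sub_log_eq_zero_iff_eq_lambertW {W : ℝ → ℝ}
    (hW : ∀ x : ℝ, 0 < x → 0 < W x ∧ W x * exp (W x) = x) {u c : ℝ} (hu : 0 < u) :
    c - u - log u = 0 ↔ u = W (exp c) := by
  obtain ⟨hWpos, hWeq⟩ := hW _ (exp_pos c)
  rw [← mul_exp_eq_exp_iff hu]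
  refine ⟨fun h => strictMonoOn_mul_exp.injOn hu.le hWpos.le (h.trans hWeq.symm), ?_⟩
  rintro rfl
  exact hWeq

lemma Finset.div_one_sub_sum_eq_iff {ι : Type*} (S : Finset ι) {q w : ι → ℝ}
    (hw : ∀ i ∈ S, 0 ≤ w i) :
    ((∑ j ∈ S, q j) < 1 ∧ ∀ i ∈ S, q i / (1 - ∑ j ∈ S, q j) = w i) ↔
      ∀ i ∈ S, q i = w i / (1 + ∑ j ∈ S, w j) := by
  have hW : 0 < 1 + ∑ j ∈ S, w j := by linarith [sum_nonneg hw]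
  constructor
  · rintro ⟨hlt, hratio⟩
    have hD : 0 < 1 - ∑ j ∈ S, q j := by linarith
    have hq : ∀ i ∈ S, q i = w i * (1 - ∑ j ∈ S, q j) := fun i hi => by
      rw [← hratio i hi, div_mul_cancel₀ _ hD.ne']
    have hsum : ∑ j ∈ S, q j = (∑ j ∈ S, w j) * (1 - ∑ j ∈ S, q j) := by
      rw [sum_mul]; exact sum_congr rfl hq
    have hDval : 1 - ∑ j ∈ S, q j = 1 / (1 + ∑ j ∈ S, w j) := by
      rw [eq_div_iff hW.ne']; linarith
    intro i hi
    rw [hq i hi, hDval, mul_one_div]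
  · intro hq
    have hsum : ∑ j ∈ S, q j = (∑ j ∈ S, w j) / (1 + ∑ j ∈ S, w j) := by
      rw [sum_div]; exact sum_congr rfl hq
    have hDval : 1 - ∑ j ∈ S, q j = 1 / (1 + ∑ j ∈ S, w j) := by
      rw [hsum]; field_simp; ring
    refine ⟨by linarith [one_div_pos.mpr hW], fun i hi => ?_⟩
    rw [hDval, hq i hi]; field_simp

theorem cournot_equilibrium_unique_general
    {ι : Type*} (S : Finset ι) (θ : ι → ℝ)
    (W : ℝ → ℝ)
    (hW : ∀ x : ℝ, 0 < x → 0 < W x ∧ W x * Real.exp (W x) = x)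
    (w : ι → ℝ) (hw : ∀ i, w i = W (Real.exp (θ i - 1))) :
    ∀ q : ι → ℝ,
      ((∀ i ∈ S, 0 < q i) ∧ (∑ j ∈ S, q j) < 1 ∧
        (∀ i ∈ S,
          θ i - 1 - q i / (1 - ∑ j ∈ S, q j)
            - Real.log (q i / (1 - ∑ j ∈ S, q j)) = 0))
      ↔ (∀ i ∈ S, q i = w i / (1 + ∑ j ∈ S, w j)) := by
  have hwpos : ∀ i, 0 < w i := fun i => hw i ▸ (hW _ (exp_pos _)).1
  intro q
  rw [← S.div_one_sub_sum_eq_iff fun i _ => (hwpos i).le]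
  constructor
  · rintro ⟨hpos, hlt, hfoc⟩
    have hD : 0 < 1 - ∑ j ∈ S, q j := by linarith
    refine ⟨hlt, fun i hi => ?_⟩
    rw [hw i, ← sub_sub_log_eq_zero_iff_eq_lambertW hW (div_pos (hpos i hi) hD)]
    exact hfoc i hi
  · rintro ⟨hlt, hratio⟩
    have hD : 0 < 1 - ∑ j ∈ S, q j := by linarith
    refine ⟨fun i hi => ?_, hlt, fun i hi => ?_⟩
    · exact (div_pos_iff_of_pos_right hD).mp (hratio i hi ▸ hwpos i)
    · rw [hratio i hi, sub_sub_log_eq_zero_iff_eq_lambertW hW (hwpos i), hw i]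

theorem cournot_equilibrium_unique
    {ι : Type*} (S : Finset ι) (hS : S.Nonempty) (θ : ι → ℝ)
    (W : ℝ → ℝ)
    (hW : ∀ x : ℝ, 0 < x → 0 < W x ∧ W x * Real.exp (W x) = x)
    (w : ι → ℝ) (hw : ∀ i, w i = W (Real.exp (θ i - 1))) :
    ∀ q : ι → ℝ,
      ((∀ i ∈ S, 0 < q i) ∧ (∑ j ∈ S, q j) < 1 ∧
        (∀ i ∈ S,
          θ i - 1 - q i / (1 - ∑ j ∈ S, q j)
            - Real.log (q i / (1 - ∑ j ∈ S, q j)) = 0))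
      ↔ (∀ i ∈ S, q i = w i / (1 + ∑ j ∈ S, w j)) :=
  cournot_equilibrium_unique_general S θ W hW w hw
end

section
/- In the Cournot game under the MNL model, the equilibrium price of product i is p_i = 1 + W(exp(θ_i - 1)), where p_i = θ_i + log(1 - Σ_{j∈S} q_j) - log(q_i) and q_i = w_i/(1 + Σ_{j∈S} w_j) with w_j = W(exp(θ_j - 1)). -/
/-! Inverting the MNL demand gives `p i = θ i + log (q₀ / q i)` with outside share
`q₀ = 1 - ∑ q = 1 / (1 + ∑ w)` and `q i = w i / (1 + ∑ w)`, so `p i = θ i - log (w i)`.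
Taking logarithms in `w i * exp (w i) = exp (θ i - 1)` gives `θ i - log (w i) = 1 + w i`. -/

open Real Finset

lemma Real.log_add_self_of_mul_exp_eq {w x : ℝ} (hw : 0 < w) (h : w * exp w = x) :
    log w + w = log x := by
  rw [← h, log_mul hw.ne' (exp_ne_zero w), log_exp]

lemma one_sub_sum_div_one_add_sum {ι : Type*} (S : Finset ι) (w : ι → ℝ)
    (h : 1 + ∑ j ∈ S, w j ≠ 0) :
    1 - ∑ j ∈ S, w j / (1 + ∑ k ∈ S, w k) = 1 / (1 + ∑ j ∈ S, w j) := by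
  rw [← sum_div]
  field_simp
  ring

lemma log_outside_share_sub_log_share {ι : Type*} (S : Finset ι) (w : ι → ℝ) (i : ι)
    (hwi : 0 < w i) (h : 0 < 1 + ∑ j ∈ S, w j) :
    log (1 - ∑ j ∈ S, w j / (1 + ∑ k ∈ S, w k)) - log (w i / (1 + ∑ k ∈ S, w k)) =
      -log (w i) := by
  rw [one_sub_sum_div_one_add_sum S w h.ne', log_div one_ne_zero h.ne',
    log_div hwi.ne' h.ne', log_one]
  ring

theorem cournot_equilibrium_price_general
    {ι : Type*} (S : Finset ι) (θ : ι → ℝ)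
    (W : ℝ → ℝ)
    (hW : ∀ x : ℝ, 0 < x → 0 < W x ∧ W x * Real.exp (W x) = x)
    (w : ι → ℝ) (hw : ∀ i, w i = W (Real.exp (θ i - 1)))
    (q : ι → ℝ) (hq : ∀ i, q i = w i / (1 + ∑ j ∈ S, w j))
    (p : ι → ℝ)
    (hp : ∀ i, p i = θ i + Real.log (1 - ∑ j ∈ S, q j) - Real.log (q i)) :
    ∀ i ∈ S, p i = 1 + W (Real.exp (θ i - 1)) := by
  have hW_w : ∀ i, 0 < w i ∧ w i * exp (w i) = exp (θ i - 1) := fun i =>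
    hw i ▸ hW _ (exp_pos _)
  have hT : 0 < 1 + ∑ j ∈ S, w j :=
    add_pos_of_pos_of_nonneg one_pos (sum_nonneg fun j _ => (hW_w j).1.le)
  intro i _
  have hlambert := log_add_self_of_mul_exp_eq (hW_w i).1 (hW_w i).2
  rw [log_exp] at hlambert
  calc p i = θ i + (log (1 - ∑ j ∈ S, q j) - log (q i)) := by rw [hp i]; ring
    _ = θ i - log (w i) := by
      simp only [hq]
      rw [log_outside_share_sub_log_share S w i (hW_w i).1 hT]
      ring
    _ = 1 + W (exp (θ i - 1)) := by rw [← hw i]; linarith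

theorem cournot_equilibrium_price
    {ι : Type*} (S : Finset ι) (hS : S.Nonempty) (θ : ι → ℝ)
    (W : ℝ → ℝ)
    (hW : ∀ x : ℝ, 0 < x → 0 < W x ∧ W x * Real.exp (W x) = x)
    (w : ι → ℝ) (hw : ∀ i, w i = W (Real.exp (θ i - 1)))
    (q : ι → ℝ) (hq : ∀ i, q i = w i / (1 + ∑ j ∈ S, w j))
    (p : ι → ℝ)
    (hp : ∀ i, p i = θ i + Real.log (1 - ∑ j ∈ S, q j) - Real.log (q i)) :
    ∀ i ∈ S, p i = 1 + W (Real.exp (θ i - 1)) :=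
  cournot_equilibrium_price_general S θ W hW w hw q hq p hp
end

section
/- Fix nonnegative reals w_t for t in a finite set T and define ĝ(w) = (Σ_t (w_t² + w_t) + w² + w)/(1 + Σ_t w_t + w) for w ≥ 0. Then ĝ is quasi-convex on [0, M] for any M > 0, i.e., for all w ∈ [0,M], ĝ(w) ≤ max(ĝ(0), ĝ(M)). -/
/-!
With `c = 1 + Σ w_t` and `q = Σ (w_t² + w_t)`, long division gives
`ĝ(w) = w + 1 - c + (c² - c + q) / (w + c)`, and `c² - c + q = (1 + Σ w_t) Σ w_t + q ≥ 0`.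
So `ĝ` is an affine function plus a nonnegative multiple of the convex hyperbola `1 / (w + c)`,
hence convex on `w > -c`, and a convex function on a segment is bounded by its values at the ends.
-/

open Set

theorem convexOn_const_div_add {K : ℝ} (hK : 0 ≤ K) (c : ℝ) :
    ConvexOn ℝ (Ioi (-c)) fun x => K / (x + c) := by
  have hpre : (fun z => c + z) ⁻¹' Ioi 0 = Ioi (-c) := by
    ext x
    simp only [mem_preimage, mem_Ioi]
    constructor <;> intro <;> linarith
  have hinv : ConvexOn ℝ (Ioi (-c)) fun x => (x + c) ^ (-1 : ℤ) :=
    hpre ▸ (convexOn_zpow (-1)).translate_left c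
  simpa [div_eq_mul_inv] using hinv.smul hK

theorem convexOn_quadratic_div_linear {q c : ℝ} (h : 0 ≤ c ^ 2 - c + q) :
    ConvexOn ℝ (Ioi (-c)) fun x => (q + x ^ 2 + x) / (c + x) := by
  have hdecomp : EqOn (fun x => x + (1 - c) + (c ^ 2 - c + q) / (x + c))
      (fun x => (q + x ^ 2 + x) / (c + x)) (Ioi (-c)) := by
    intro x (hx : -c < x)
    have : x + c ≠ 0 := by linarith
    simp only [add_comm c x]
    field_simp
    ring
  refine ConvexOn.congr ?_ hdecomp
  exact ((convexOn_id (convex_Ioi _)).add_const _).add (convexOn_const_div_add h c)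

theorem cournot_revenue_quasiconvex
    {ι : Type*} (T : Finset ι) (wt : ι → ℝ) (hwt : ∀ t ∈ T, 0 ≤ wt t)
    (g : ℝ → ℝ)
    (hg : ∀ w : ℝ, g w =
      ((∑ t ∈ T, (wt t ^ 2 + wt t)) + w ^ 2 + w) /
        (1 + (∑ t ∈ T, wt t) + w)) :
    ∀ M : ℝ, 0 < M → ∀ w ∈ Set.Icc (0:ℝ) M, g w ≤ max (g 0) (g M) := by
  intro M hM w hw
  set S := ∑ t ∈ T, wt t
  set Q := ∑ t ∈ T, (wt t ^ 2 + wt t)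
  have hS : 0 ≤ S := Finset.sum_nonneg hwt
  have hQ : 0 ≤ Q := Finset.sum_nonneg fun t ht => add_nonneg (sq_nonneg _) (hwt t ht)
  have hconv : ConvexOn ℝ (Ioi (-(1 + S))) g := by
    rw [funext hg]
    exact convexOn_quadratic_div_linear (by nlinarith)
  have hmem : ∀ x, 0 ≤ x → x ∈ Ioi (-(1 + S)) := fun x hx => show -(1 + S) < x by linarith
  exact hconv.le_on_segment (hmem 0 le_rfl) (hmem M hM.le) (by rwa [segment_eq_Icc hM.le])
end
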